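/- Let ζ :⊆ Y ⇉ ℕ^ℕ be a probe for a represented space Y, let T :⊆ X ⇉ Y be a transparent cylinder, and let f :⊆ A ⇉ B be a partial multivalued function between represented spaces. Then player II has a winning strategy in the (ζ, T)-Wadge game for f if and only if f ≤_W^c T. -/

import Mathlib

open Filter Topology

/-! ### Partial functions on Baire space -/

/-- A partial function on Baire space, given by a domain and an underlying total
function (whose values outside the domain are irrelevant). -/
structure PFunB where
  dom : Set (ℕ → ℕ)
  toFun : (ℕ → ℕ) → (ℕ → ℕ)

/-- A partial function on Baire space is continuous if its underlying function is
continuous on its domain. -/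
def PFunB.IsContinuous (F : PFunB) : Prop := ContinuousOn F.toFun F.dom

/-- Composition of partial functions on Baire space. -/
def PFunB.comp (F G : PFunB) : PFunB where
  dom := {p | p ∈ G.dom ∧ G.toFun p ∈ F.dom}
  toFun := fun p => F.toFun (G.toFun p)

/-- A partial function from (Baire space) × (Baire space) to Baire space. -/
structure PFunB2 where
  dom : Set ((ℕ → ℕ) × (ℕ → ℕ))
  toFun : (ℕ → ℕ) × (ℕ → ℕ) → (ℕ → ℕ)

def PFunB2.IsContinuous (K : PFunB2) : Prop := ContinuousOn K.toFun K.dom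

/-! ### Coding of sequences -/

/-- The `n`-th column of `p : ℕ → ℕ`, via the standard pairing bijection. -/
def col (p : ℕ → ℕ) (n : ℕ) : ℕ → ℕ := fun k => p (Nat.pair n k)

/-- Interleaving pairing of two elements of Baire space. -/
def pairB (p q : ℕ → ℕ) : ℕ → ℕ := fun n => if n % 2 = 0 then p (n / 2) else q (n / 2)

def leftB (r : ℕ → ℕ) : ℕ → ℕ := fun n => r (2 * n)

def rightB (r : ℕ → ℕ) : ℕ → ℕ := fun n => r (2 * n + 1)

theorem leftB_pairB (p q : ℕ → ℕ) : leftB (pairB p q) = p := by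
  funext n
  show (if (2 * n) % 2 = 0 then p ((2 * n) / 2) else q ((2 * n) / 2)) = p n
  rw [if_pos (by omega)]
  congr 1
  omega

theorem rightB_pairB (p q : ℕ → ℕ) : rightB (pairB p q) = q := by
  funext n
  show (if (2 * n + 1) % 2 = 0 then p ((2 * n + 1) / 2) else q ((2 * n + 1) / 2)) = q n
  rw [if_neg (by omega)]
  congr 1
  omega

/-! ### Represented spaces -/

/-- A represented space: a set `X` together with a partial surjection from Baire space
onto `X` (modelled as a total map together with a domain, such that every point has a
name in the domain). -/
structure RepSpace (X : Type u) where
  dom : Set (ℕ → ℕ)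
  map : (ℕ → ℕ) → X
  surj : ∀ x : X, ∃ p ∈ dom, map p = x

/-- Baire space with the identity representation. -/
def idRep : RepSpace (ℕ → ℕ) := ⟨Set.univ, id, fun x => ⟨x, trivial, rfl⟩⟩

/-- The representation of `X`, viewed as a partial multivalued function from Baire
space to `X` (with empty value outside the domain). -/
def RepSpace.toMV {X : Type u} (δ : RepSpace X) : (ℕ → ℕ) → Set X :=
  fun p => {x | p ∈ δ.dom ∧ δ.map p = x}

/-- Product of represented spaces, via the interleaving pairing homeomorphism. -/
def RepSpace.prod {X : Type u} {Y : Type v} (δX : RepSpace X) (δY : RepSpace Y) :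
    RepSpace (X × Y) where
  dom := {r | leftB r ∈ δX.dom ∧ rightB r ∈ δY.dom}
  map := fun r => (δX.map (leftB r), δY.map (rightB r))
  surj := by
    rintro ⟨x, y⟩
    obtain ⟨p, hp, hpx⟩ := δX.surj x
    obtain ⟨q, hq, hqy⟩ := δY.surj y
    refine ⟨pairB p q, ⟨?_, ?_⟩, ?_⟩
    · rw [leftB_pairB]; exact hp
    · rw [rightB_pairB]; exact hq
    · show (δX.map (leftB (pairB p q)), δY.map (rightB (pairB p q))) = (x, y)
      rw [leftB_pairB, rightB_pairB, hpx, hqy]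

/-- The represented space of sequences in `X`: `δ(p) = (δ_X((p)_n))_n`. -/
def RepSpace.seq {X : Type u} (δ : RepSpace X) : RepSpace (ℕ → X) where
  dom := {p | ∀ n, col p n ∈ δ.dom}
  map := fun p n => δ.map (col p n)
  surj := by
    intro x
    choose q hq hmap using fun n => δ.surj (x n)
    have hcol : ∀ n, col (fun m => q (Nat.unpair m).1 (Nat.unpair m).2) n = q n := by
      intro n; funext k; simp [col]
    refine ⟨fun m => q (Nat.unpair m).1 (Nat.unpair m).2, fun n => ?_, ?_⟩
    · rw [hcol]; exact hq n
    · funext n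
      show δ.map (col (fun m => q (Nat.unpair m).1 (Nat.unpair m).2) n) = x n
      rw [hcol]; exact hmap n

/-! ### Partial multivalued functions -/

/-- Composition of partial multivalued functions (with the domain convention
`dom (f ∘ g) = {x ∈ dom g : g x ⊆ dom f}`; a partial multivalued function is modelled
as a `Set`-valued function whose domain is the set of points with nonempty value). -/
def MComp {X : Type u} {Y : Type v} {Z : Type w} (f : Y → Set Z) (g : X → Set Y) :
    X → Set Z :=
  fun x => {z | (∀ y ∈ g x, (f y).Nonempty) ∧ ∃ y ∈ g x, z ∈ f y}

/-- `f` tightens `g`: `dom g ⊆ dom f` and `f x ⊆ g x` for every `x ∈ dom g`. -/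
def Tightens {X : Type u} {Y : Type v} (f g : X → Set Y) : Prop :=
  ∀ x, (g x).Nonempty → (f x).Nonempty ∧ f x ⊆ g x

/-- `F` is a realizer of the partial multivalued function `f`. -/
def Realizes {X : Type u} {Y : Type v} (δX : RepSpace X) (δY : RepSpace Y)
    (F : PFunB) (f : X → Set Y) : Prop :=
  ∀ p ∈ δX.dom, (f (δX.map p)).Nonempty →
    p ∈ F.dom ∧ F.toFun p ∈ δY.dom ∧ δY.map (F.toFun p) ∈ f (δX.map p)

/-- A partial multivalued function between represented spaces is continuous if it has a
continuous realizer. -/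
def MCts {X : Type u} {Y : Type v} (δX : RepSpace X) (δY : RepSpace Y)
    (f : X → Set Y) : Prop :=
  ∃ F : PFunB, F.IsContinuous ∧ Realizes δX δY F f

/-- Strong continuous Weihrauch reducibility `f ≤_sW^c g`. -/
def StrongWc {A : Type u} {B : Type v} {C : Type w} {D : Type x}
    (δA : RepSpace A) (δB : RepSpace B) (δC : RepSpace C) (δD : RepSpace D)
    (f : A → Set B) (g : C → Set D) : Prop :=
  ∃ K H : PFunB, K.IsContinuous ∧ H.IsContinuous ∧
    ∀ G : PFunB, Realizes δC δD G g → Realizes δA δB (K.comp (G.comp H)) f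

/-- Continuous Weihrauch reducibility `f ≤_W^c g`. -/
def Wc {A : Type u} {B : Type v} {C : Type w} {D : Type x}
    (δA : RepSpace A) (δB : RepSpace B) (δC : RepSpace C) (δD : RepSpace D)
    (f : A → Set B) (g : C → Set D) : Prop :=
  ∃ (K : PFunB2) (H : PFunB), K.IsContinuous ∧ H.IsContinuous ∧
    ∀ G : PFunB, Realizes δC δD G g →
      Realizes δA δB
        ⟨{p | p ∈ H.dom ∧ H.toFun p ∈ G.dom ∧ (p, G.toFun (H.toFun p)) ∈ K.dom},
          fun p => K.toFun (p, G.toFun (H.toFun p))⟩ f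

/-- Continuous Weihrauch equivalence `f ≡_W^c g`. -/
def WcEquiv {A : Type u} {B : Type v} {C : Type w} {D : Type x}
    (δA : RepSpace A) (δB : RepSpace B) (δC : RepSpace C) (δD : RepSpace D)
    (f : A → Set B) (g : C → Set D) : Prop :=
  Wc δA δB δC δD f g ∧ Wc δC δD δA δB g f

/-- `id_{ℕ^ℕ} × g` for a partial multivalued `g`. -/
def idProd {C : Type u} {D : Type v} (g : C → Set D) :
    (ℕ → ℕ) × C → Set ((ℕ → ℕ) × D) :=
  fun pc => {qd | qd.1 = pc.1 ∧ qd.2 ∈ g pc.2}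

/-- `f` is a cylinder if `id_{ℕ^ℕ} × f ≤_sW^c f`. -/
def IsCylinder {X : Type u} {Y : Type v} (δX : RepSpace X) (δY : RepSpace Y)
    (f : X → Set Y) : Prop :=
  StrongWc (idRep.prod δX) (idRep.prod δY) δX δY (idProd f) f

/-- `T :⊆ X ⇉ Y` is transparent: for every continuous `g :⊆ Y ⇉ Y` there is a
continuous `f :⊆ X ⇉ X` with `T ∘ f ⪯ g ∘ T`. -/
def Transparent {X : Type u} {Y : Type v} (δX : RepSpace X) (δY : RepSpace Y)
    (T : X → Set Y) : Prop :=
  ∀ g : Y → Set Y, MCts δY δY g →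
    ∃ f : X → Set X, MCts δX δX f ∧ Tightens (MComp T f) (MComp g T)

/-- `ζ :⊆ Y ⇉ ℕ^ℕ` is a probe for `Y`: it is continuous, and for every continuous
`f :⊆ Y ⇉ ℕ^ℕ` there is a continuous `e :⊆ Y ⇉ Y` with `ζ ∘ e ⪯ f`. -/
def IsProbe {Y : Type u} (δY : RepSpace Y) (ζ : Y → Set (ℕ → ℕ)) : Prop :=
  MCts δY idRep ζ ∧
    ∀ f : Y → Set (ℕ → ℕ), MCts δY idRep f →
      ∃ e : Y → Set Y, MCts δY δY e ∧ Tightens (MComp ζ e) f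

/-- Parallelization of a partial multivalued function. -/
def Parallel {X : Type u} {Y : Type v} (f : X → Set Y) : (ℕ → X) → Set (ℕ → Y) :=
  fun xs => {ys | ∀ n, ys n ∈ f (xs n)}

/-! ### Games -/

/-- A strategy for player II: to each finite sequence of I's moves it assigns a natural
number or a pass (`none`). -/
abbrev Strategy := List ℕ → Option ℕ

/-- The move of player II (following `σ`) after I has played `x 0, …, x n`. -/
def respond (σ : Strategy) (x : ℕ → ℕ) (n : ℕ) : Option ℕ :=
  σ (List.ofFn fun i : Fin (n + 1) => x i)

/-- Player II plays natural numbers at infinitely many rounds of the run against `x`. -/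
def InfPlays (σ : Strategy) (x : ℕ → ℕ) : Prop :=
  {n | (respond σ x n).isSome = true}.Infinite

/-- The element of Baire space built by player II in the run against `x`
(the subsequence of her non-pass moves). -/
noncomputable def output (σ : Strategy) (x : ℕ → ℕ) : ℕ → ℕ :=
  fun k => (respond σ x (Nat.nth (fun n => (respond σ x n).isSome = true) k)).getD 0

/-- The partial multivalued function `δ_B ∘ ζ ∘ T ∘ δ_X :⊆ ℕ^ℕ ⇉ B` used in the winning
condition of the `(ζ, T)`-Wadge game. -/
def GameMap {X : Type u} {Y : Type v} {B : Type w} (δX : RepSpace X) (δB : RepSpace B)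
    (ζ : Y → Set (ℕ → ℕ)) (T : X → Set Y) : (ℕ → ℕ) → Set B :=
  MComp δB.toMV (MComp ζ (MComp T δX.toMV))

/-- `σ` is a winning strategy for player II in the `(ζ, T)`-Wadge game for `f`:
for every run `x` built by player I with `x ∈ dom (f ∘ δ_A)`, player II plays natural
numbers infinitely often, her output `y` lies in `dom (δ_B ∘ ζ ∘ T ∘ δ_X)`, and
`(δ_B ∘ ζ ∘ T ∘ δ_X)(y) ⊆ (f ∘ δ_A)(x)` (runs with `x ∉ dom (f ∘ δ_A)` are won by II
automatically). -/
def WadgeWinning {X : Type u} {Y : Type v} {A : Type w} {B : Type x}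
    (δX : RepSpace X) (δA : RepSpace A) (δB : RepSpace B)
    (ζ : Y → Set (ℕ → ℕ)) (T : X → Set Y) (f : A → Set B) (σ : Strategy) : Prop :=
  ∀ x : ℕ → ℕ, (MComp f δA.toMV x).Nonempty →
    InfPlays σ x ∧
    (GameMap δX δB ζ T (output σ x)).Nonempty ∧
    GameMap δX δB ζ T (output σ x) ⊆ MComp f δA.toMV x

/-! ### lim, isFinite and the Baire hierarchy -/

/-- The partial function `lim :⊆ ℕ^ℕ → ℕ^ℕ`, `lim(p) = lim_n (p)_n` (pointwise limit),
viewed as a partial multivalued function with singleton values on its domain. -/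
def limFn : (ℕ → ℕ) → Set (ℕ → ℕ) :=
  fun p => {q | ∀ k, ∀ᶠ n in atTop, col p n k = q k}

/-- The space `{0,1}^ℕ` of binary sequences. -/
abbrev BSeq : Type := {p : ℕ → ℕ // ∀ n, p n ≤ 1}

/-- `{0,1}^ℕ` with the identity representation (as a subspace of Baire space). -/
def repBSeq : RepSpace BSeq where
  dom := {p | ∀ n, p n ≤ 1}
  map := fun p => ⟨fun n => min (p n) 1, fun _ => min_le_right _ _⟩
  surj := fun x => ⟨x.1, x.2, Subtype.ext (funext fun n => min_eq_left (x.2 n))⟩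

/-- The two-point space `{0,1}`. -/
abbrev TwoPt : Type := {n : ℕ // n ≤ 1}

/-- The two-point space `{0,1}` represented by `δ(p) = p 0`. -/
def repTwo : RepSpace TwoPt where
  dom := {p | p 0 ≤ 1}
  map := fun p => ⟨min (p 0) 1, min_le_right _ _⟩
  surj := fun x => ⟨fun _ => x.1, x.2, Subtype.ext (min_eq_left x.2)⟩

open Classical in
/-- `isFinite(p) = 1` iff `{n : p n = 1}` is finite. -/
noncomputable def isFinite : BSeq → TwoPt :=
  fun p => if {n | p.1 n = 1}.Finite then ⟨1, le_refl 1⟩ else ⟨0, Nat.zero_le 1⟩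

/-- The finite levels of the Baire hierarchy: Baire class 0 functions are the continuous
ones, and Baire class `n+1` functions are pointwise limits of sequences of Baire class
`n` functions. -/
def BaireClass : ℕ → ((ℕ → ℕ) → (ℕ → ℕ)) → Prop
  | 0, f => Continuous f
  | n + 1, f => ∃ g : ℕ → (ℕ → ℕ) → (ℕ → ℕ),
      (∀ k, BaireClass n (g k)) ∧ ∀ x, Tendsto (fun k => g k x) atTop (𝓝 (f x))

/-!
A strategy for II is essentially a continuous function on the runs in which II plays
infinitely often: her output depends continuously on I's moves and, conversely, any continuous
`F` is played by announcing the value `F x k` as soon as a finite prefix of `x` decides it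
on `dom F`. So a winning strategy, followed by a realizer of `ζ`, is a continuous Weihrauch
reduction of `f` to `T`. Conversely, since `T` is a cylinder, `f ≤_W^c T` improves to a strong
reduction `(H, K)`. The probe property turns `K`, read as a continuous map on `Y`, into
`ζ ∘ e` for a continuous `e : Y ⇉ Y`; transparency pulls `e` back along `T` to a continuous
`d : X ⇉ X`, and II wins by playing a realizer of `d` after `H`.
-/

open PiNat

section MultivaluedComposition

variable {X Y Z W : Type*}

theorem mcomp_nonempty_and_forall_iff {g : Y → Set Z} {h : X → Set Y} {x : X} {P : Z → Prop} :
    ((MComp g h x).Nonempty ∧ ∀ z ∈ MComp g h x, P z) ↔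
      (h x).Nonempty ∧ ∀ y ∈ h x, (g y).Nonempty ∧ ∀ z ∈ g y, P z := by
  constructor
  · rintro ⟨⟨z, hall, y, hy, hz⟩, hP⟩
    exact ⟨⟨y, hy⟩, fun y' hy' => ⟨hall y' hy', fun z' hz' => hP z' ⟨hall, y', hy', hz'⟩⟩⟩
  · rintro ⟨⟨y, hy⟩, hall⟩
    obtain ⟨z, hz⟩ := (hall y hy).1
    exact ⟨⟨z, fun y' hy' => (hall y' hy').1, y, hy, hz⟩,
      fun z' ⟨_, y', hy', hz'⟩ => (hall y' hy').2 z' hz'⟩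

theorem mcomp_assoc (f : Z → Set W) (g : Y → Set Z) (h : X → Set Y) :
    MComp f (MComp g h) = MComp (MComp f g) h := by
  ext x w
  constructor
  · rintro ⟨hall, z, ⟨hgall, y, hy, hz⟩, hw⟩
    have hfg : ∀ y ∈ h x, ∀ z ∈ g y, (f z).Nonempty := fun y hy z hz =>
      hall z ⟨hgall, y, hy, hz⟩
    refine ⟨fun y' hy' => ?_, y, hy, hfg y hy, z, hz, hw⟩
    obtain ⟨z', hz'⟩ := hgall y' hy'
    obtain ⟨w', hw'⟩ := hfg y' hy' z' hz'
    exact ⟨w', hfg y' hy', z', hz', hw'⟩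
  · rintro ⟨hall, y, hy, -, z, hz, hw⟩
    have hfg : ∀ y ∈ h x, (g y).Nonempty ∧ ∀ z ∈ g y, (f z).Nonempty := fun y hy =>
      let ⟨_, hfall, z, hz, _⟩ := hall y hy
      ⟨⟨z, hz⟩, hfall⟩
    exact ⟨fun z ⟨_, y, hy, hz⟩ => (hfg y hy).2 z hz,
      z, ⟨fun y hy => (hfg y hy).1, y, hy, hz⟩, hw⟩

theorem Tightens.trans {f g h : X → Set Y} (hfg : Tightens f g) (hgh : Tightens g h) :
    Tightens f h := fun x hx =>
  let ⟨hgx, hgh⟩ := hgh x hx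
  let ⟨hfx, hfg⟩ := hfg x hgx
  ⟨hfx, hfg.trans hgh⟩

theorem Tightens.mcomp_left (k : Y → Set Z) {f g : X → Set Y} (h : Tightens f g) :
    Tightens (MComp k f) (MComp k g) := by
  rintro x ⟨-, hall, y, hy, -⟩
  obtain ⟨⟨y', hy'⟩, hsub⟩ := h x ⟨y, hy⟩
  have hall' : ∀ y ∈ f x, (k y).Nonempty := fun y hy => hall y (hsub hy)
  obtain ⟨z', hz'⟩ := hall' y' hy'
  exact ⟨⟨z', hall', y', hy', hz'⟩, fun z ⟨_, y, hy, hz⟩ => ⟨hall, y, hsub hy, hz⟩⟩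

theorem Tightens.mcomp_right {f g : Y → Set Z} (h : Tightens f g) (k : X → Set Y) :
    Tightens (MComp f k) (MComp g k) := by
  rintro x ⟨-, hall, y, hy, -⟩
  have hfg : ∀ y ∈ k x, (f y).Nonempty ∧ f y ⊆ g y := fun y hy => h y (hall y hy)
  obtain ⟨z', hz'⟩ := (hfg y hy).1
  exact ⟨⟨z', fun y hy => (hfg y hy).1, y, hy, hz'⟩,
    fun z ⟨_, y, hy, hz⟩ => ⟨hall, y, hy, (hfg y hy).2 hz⟩⟩

theorem Tightens.nonempty_and_forall {f g : X → Set Y} (h : Tightens f g) {x : X}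
    {P : Y → Prop} (hg : (g x).Nonempty ∧ ∀ y ∈ g x, P y) :
    (f x).Nonempty ∧ ∀ y ∈ f x, P y :=
  let ⟨hfx, hsub⟩ := h x hg.1
  ⟨hfx, fun y hy => hg.2 y (hsub hy)⟩

theorem toMV_nonempty_and_forall_iff {δ : RepSpace X} {p : ℕ → ℕ} {P : X → Prop} :
    ((δ.toMV p).Nonempty ∧ ∀ x ∈ δ.toMV p, P x) ↔ p ∈ δ.dom ∧ P (δ.map p) := by
  constructor
  · rintro ⟨⟨x, hp, rfl⟩, hP⟩
    exact ⟨hp, hP _ ⟨hp, rfl⟩⟩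
  · rintro ⟨hp, hP⟩
    exact ⟨⟨_, hp, rfl⟩, by rintro x ⟨-, rfl⟩; exact hP⟩

theorem mem_mcomp_toMV {δ : RepSpace X} {f : X → Set Y} {p : ℕ → ℕ} {y : Y} :
    y ∈ MComp f δ.toMV p ↔ p ∈ δ.dom ∧ y ∈ f (δ.map p) := by
  constructor
  · rintro ⟨-, x, ⟨hp, rfl⟩, hy⟩
    exact ⟨hp, hy⟩
  · rintro ⟨hp, hy⟩
    exact ⟨by rintro x ⟨-, rfl⟩; exact ⟨y, hy⟩, _, ⟨hp, rfl⟩, hy⟩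

theorem mcomp_toMV_nonempty_iff {δ : RepSpace X} {f : X → Set Y} {p : ℕ → ℕ} :
    (MComp f δ.toMV p).Nonempty ↔ p ∈ δ.dom ∧ (f (δ.map p)).Nonempty := by
  simp only [Set.Nonempty, mem_mcomp_toMV, exists_and_left]

theorem gameMap_nonempty_and_subset_iff {B : Type*} {δX : RepSpace X} {δB : RepSpace B}
    {ζ : Y → Set (ℕ → ℕ)} {T : X → Set Y} {y : ℕ → ℕ} {S : Set B} :
    ((GameMap δX δB ζ T y).Nonempty ∧ GameMap δX δB ζ T y ⊆ S) ↔
      y ∈ δX.dom ∧ (T (δX.map y)).Nonempty ∧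
        ∀ z ∈ T (δX.map y), (ζ z).Nonempty ∧ ∀ w ∈ ζ z, w ∈ δB.dom ∧ δB.map w ∈ S := by
  simp only [GameMap, Set.subset_def, mcomp_nonempty_and_forall_iff,
    toMV_nonempty_and_forall_iff]

end MultivaluedComposition

section Realizers

variable {A B C D : Type*} {δA : RepSpace A} {δB : RepSpace B} {δC : RepSpace C}
  {δD : RepSpace D} {f : A → Set B} {g : C → Set D}

theorem exists_realizes_dom_eq (δC : RepSpace C) (δD : RepSpace D) (g : C → Set D) :
    ∃ G : PFunB, G.dom = {r | r ∈ δC.dom ∧ (g (δC.map r)).Nonempty} ∧ Realizes δC δD G g := by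
  have hname : ∀ r, ∃ q, r ∈ δC.dom ∧ (g (δC.map r)).Nonempty →
      q ∈ δD.dom ∧ δD.map q ∈ g (δC.map r) := by
    intro r
    by_cases hr : r ∈ δC.dom ∧ (g (δC.map r)).Nonempty
    · obtain ⟨y, hy⟩ := hr.2
      obtain ⟨q, hq, rfl⟩ := δD.surj y
      exact ⟨q, fun _ => ⟨hq, hy⟩⟩
    · exact ⟨r, fun h => absurd h hr⟩
  choose G hG using hname
  exact ⟨⟨_, G⟩, rfl, fun r hr hg => ⟨⟨hr, hg⟩, hG r ⟨hr, hg⟩⟩⟩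

open Classical in
theorem Realizes.exists_eq_at {G : PFunB} (hG : Realizes δC δD G g) {r q : ℕ → ℕ}
    (hq : q ∈ δD.dom) (hqr : δD.map q ∈ g (δC.map r)) :
    ∃ G' : PFunB, Realizes δC δD G' g ∧ G'.toFun r = q := by
  refine ⟨⟨G.dom, Function.update G.toFun r q⟩, fun r' hr' hg => ?_, by simp⟩
  rcases eq_or_ne r' r with rfl | hne
  · simpa [hq, hqr] using (hG r' hr' hg).1
  · simpa [hne] using hG r' hr' hg

/-- Pointwise form of a continuous Weihrauch reduction of `f` to `g` via `(H, K)`: it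
quantifies over all names of all solutions of `g`, instead of over realizers of `g`. -/
def ReducesVia (δA : RepSpace A) (δB : RepSpace B) (δC : RepSpace C) (δD : RepSpace D)
    (f : A → Set B) (g : C → Set D) (H : PFunB) (K : PFunB2) : Prop :=
  ∀ p ∈ δA.dom, (f (δA.map p)).Nonempty →
    p ∈ H.dom ∧ H.toFun p ∈ δC.dom ∧ (g (δC.map (H.toFun p))).Nonempty ∧
      ∀ q ∈ δD.dom, δD.map q ∈ g (δC.map (H.toFun p)) →
        (p, q) ∈ K.dom ∧ K.toFun (p, q) ∈ δB.dom ∧ δB.map (K.toFun (p, q)) ∈ f (δA.map p)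

def StrongReducesVia (δA : RepSpace A) (δB : RepSpace B) (δC : RepSpace C) (δD : RepSpace D)
    (f : A → Set B) (g : C → Set D) (H K : PFunB) : Prop :=
  ∀ p ∈ δA.dom, (f (δA.map p)).Nonempty →
    p ∈ H.dom ∧ H.toFun p ∈ δC.dom ∧ (g (δC.map (H.toFun p))).Nonempty ∧
      ∀ q ∈ δD.dom, δD.map q ∈ g (δC.map (H.toFun p)) →
        q ∈ K.dom ∧ K.toFun q ∈ δB.dom ∧ δB.map (K.toFun q) ∈ f (δA.map p)

theorem forall_realizes_iff_reducesVia {H : PFunB} {K : PFunB2} :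
    (∀ G : PFunB, Realizes δC δD G g →
      Realizes δA δB
        ⟨{p | p ∈ H.dom ∧ H.toFun p ∈ G.dom ∧ (p, G.toFun (H.toFun p)) ∈ K.dom},
          fun p => K.toFun (p, G.toFun (H.toFun p))⟩ f) ↔
      ReducesVia δA δB δC δD f g H K := by
  obtain ⟨G₀, hG₀dom, hG₀⟩ := exists_realizes_dom_eq δC δD g
  constructor
  · intro h p hp hf
    obtain ⟨⟨hpH, hHG₀, -⟩, -⟩ := h G₀ hG₀ p hp hf
    rw [hG₀dom] at hHG₀
    refine ⟨hpH, hHG₀.1, hHG₀.2, fun q hq hqg => ?_⟩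
    obtain ⟨G, hG, hGq⟩ := hG₀.exists_eq_at hq hqg
    obtain ⟨⟨-, -, hKdom⟩, hKB, hKf⟩ := h G hG p hp hf
    simp only [hGq] at hKdom hKB hKf
    exact ⟨hKdom, hKB, hKf⟩
  · intro h G hG p hp hf
    obtain ⟨hpH, hHC, hg, hK⟩ := h p hp hf
    obtain ⟨hHG, hGD, hGg⟩ := hG _ hHC hg
    obtain ⟨hKdom, hKB, hKf⟩ := hK _ hGD hGg
    exact ⟨⟨hpH, hHG, hKdom⟩, hKB, hKf⟩

theorem wc_iff_exists_reducesVia :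
    Wc δA δB δC δD f g ↔
      ∃ (K : PFunB2) (H : PFunB), K.IsContinuous ∧ H.IsContinuous ∧
        ReducesVia δA δB δC δD f g H K := by
  simp only [Wc, forall_realizes_iff_reducesVia]

theorem StrongWc.exists_strongReducesVia (h : StrongWc δA δB δC δD f g) :
    ∃ K H : PFunB, K.IsContinuous ∧ H.IsContinuous ∧ StrongReducesVia δA δB δC δD f g H K := by
  obtain ⟨K, H, hK, hH, hKH⟩ := h
  refine ⟨K, H, hK, hH, fun p hp hf => ?_⟩
  obtain ⟨G₀, hG₀dom, hG₀⟩ := exists_realizes_dom_eq δC δD g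
  obtain ⟨⟨⟨hpH, hHG₀⟩, -⟩, -⟩ := hKH G₀ hG₀ p hp hf
  rw [hG₀dom] at hHG₀
  refine ⟨hpH, hHG₀.1, hHG₀.2, fun q hq hqg => ?_⟩
  obtain ⟨G, hG, hGq⟩ := hG₀.exists_eq_at hq hqg
  obtain ⟨⟨-, hKdom⟩, hKB, hKf⟩ := hKH G hG p hp hf
  simp only [PFunB.comp, hGq] at hKdom hKB hKf
  exact ⟨hKdom, hKB, hKf⟩

theorem StrongReducesVia.trans {E F : Type*} {δE : RepSpace E} {δF : RepSpace F}
    {h : E → Set F} {H₁ K₁ H₂ K₂ : PFunB} (h₁ : StrongReducesVia δA δB δC δD f g H₁ K₁)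
    (h₂ : StrongReducesVia δC δD δE δF g h H₂ K₂) :
    StrongReducesVia δA δB δE δF f h (H₂.comp H₁) (K₁.comp K₂) := by
  intro p hp hf
  obtain ⟨hpH₁, hH₁C, hg, hK₁⟩ := h₁ p hp hf
  obtain ⟨hH₁H₂, hH₂E, hh, hK₂⟩ := h₂ _ hH₁C hg
  refine ⟨⟨hpH₁, hH₁H₂⟩, hH₂E, hh, fun q hq hqh => ?_⟩
  obtain ⟨hqK₂, hK₂D, hK₂g⟩ := hK₂ q hq hqh
  obtain ⟨hK₁dom, hK₁B, hK₁f⟩ := hK₁ _ hK₂D hK₂g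
  exact ⟨⟨hqK₂, hK₁dom⟩, hK₁B, hK₁f⟩

end Realizers

section Cylinders

theorem continuous_pairB : Continuous fun pq : (ℕ → ℕ) × (ℕ → ℕ) => pairB pq.1 pq.2 := by
  refine continuous_pi fun n => ?_
  by_cases h : n % 2 = 0
  · simp only [pairB, if_pos h]
    fun_prop
  · simp only [pairB, if_neg h]
    fun_prop

theorem continuous_leftB : Continuous leftB := continuous_pi fun n => continuous_apply (2 * n)

theorem continuous_rightB : Continuous rightB :=
  continuous_pi fun n => continuous_apply (2 * n + 1)

theorem PFunB.IsContinuous.comp {F G : PFunB} (hF : F.IsContinuous) (hG : G.IsContinuous) :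
    (F.comp G).IsContinuous :=
  (show ContinuousOn F.toFun F.dom from hF).comp (hG.mono fun _ h => h.1) fun _ h => h.2

def PFunB.pairSelf (H : PFunB) : PFunB := ⟨H.dom, fun p => pairB p (H.toFun p)⟩

def PFunB2.onPairs (K : PFunB2) : PFunB :=
  ⟨{r | (leftB r, rightB r) ∈ K.dom}, fun r => K.toFun (leftB r, rightB r)⟩

theorem PFunB.IsContinuous.pairSelf {H : PFunB} (hH : H.IsContinuous) :
    H.pairSelf.IsContinuous :=
  continuous_pairB.comp_continuousOn (continuousOn_id.prodMk hH)

theorem PFunB2.IsContinuous.onPairs {K : PFunB2} (hK : K.IsContinuous) :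
    K.onPairs.IsContinuous :=
  hK.comp (continuous_leftB.prodMk continuous_rightB).continuousOn fun _ h => h

variable {A B X Y : Type*} {δA : RepSpace A} {δB : RepSpace B} {δX : RepSpace X}
  {δY : RepSpace Y} {f : A → Set B} {T : X → Set Y}

theorem ReducesVia.strongReducesVia_idProd {H : PFunB} {K : PFunB2}
    (h : ReducesVia δA δB δX δY f T H K) :
    StrongReducesVia δA δB (idRep.prod δX) (idRep.prod δY) f (idProd T) H.pairSelf K.onPairs := by
  intro p hp hf
  obtain ⟨hpH, hHX, ⟨y, hy⟩, hK⟩ := h p hp hf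
  have hmap : (idRep.prod δX).map (pairB p (H.toFun p)) = (p, δX.map (H.toFun p)) := by
    simp only [RepSpace.prod, idRep, leftB_pairB, rightB_pairB, id]
  refine ⟨hpH, ⟨trivial, ?_⟩, ⟨(p, y), ?_⟩, fun r ⟨_, hrY⟩ hr => ?_⟩
  · show rightB (pairB p (H.toFun p)) ∈ δX.dom
    rwa [rightB_pairB]
  · show (p, y) ∈ idProd T ((idRep.prod δX).map (pairB p (H.toFun p)))
    rw [hmap]
    exact ⟨rfl, hy⟩
  · change (idRep.prod δY).map r ∈ idProd T ((idRep.prod δX).map (pairB p (H.toFun p))) at hr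
    rw [hmap] at hr
    obtain ⟨hleft, hright⟩ := hr
    change leftB r = p at hleft
    show (leftB r, rightB r) ∈ K.dom ∧ K.toFun (leftB r, rightB r) ∈ δB.dom ∧
      δB.map (K.toFun (leftB r, rightB r)) ∈ f (δA.map p)
    rw [hleft]
    exact hK _ hrY hright

end Cylinders

section Strategies

theorem exists_cylinder_subset {s : Set (ℕ → ℕ)} {x : ℕ → ℕ} (hs : s ∈ 𝓝 x) :
    ∃ n, cylinder x n ⊆ s := by
  obtain ⟨_, ⟨y, n, rfl⟩, hx, hsub⟩ :=
    (isTopologicalBasis_cylinders fun _ : ℕ => ℕ).mem_nhds_iff.1 hs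
  exact ⟨n, by rwa [mem_cylinder_iff_eq.1 hx]⟩

theorem cylinder_mem_nhds (x : ℕ → ℕ) (n : ℕ) : cylinder x n ∈ 𝓝 x :=
  (isOpen_cylinder (fun _ : ℕ => ℕ) x n).mem_nhds (self_mem_cylinder x n)

variable {σ : Strategy} {x y : ℕ → ℕ}

theorem respond_eq_of_mem_cylinder {n : ℕ} (h : y ∈ cylinder x (n + 1)) :
    respond σ y n = respond σ x n := by
  unfold respond
  congr 2
  funext i
  exact mem_cylinder_iff.1 h i i.2

theorem output_eq_of_mem_cylinder (hx : InfPlays σ x) {k : ℕ}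
    (hy : y ∈ cylinder x (Nat.nth (fun n => (respond σ x n).isSome = true) k + 1)) :
    output σ y k = output σ x k := by
  obtain ⟨N, hN⟩ : ∃ N, Nat.nth (fun n => (respond σ x n).isSome = true) k = N := ⟨_, rfl⟩
  rw [hN] at hy
  have hresp : ∀ n ≤ N, respond σ y n = respond σ x n := fun n hn =>
    respond_eq_of_mem_cylinder (cylinder_anti x (by omega) hy)
  have hcount : Nat.count (fun n => (respond σ y n).isSome = true) N = k := by
    rw [← Nat.count_nth_of_infinite hx k, hN, Nat.count_eq_card_filter_range,
      Nat.count_eq_card_filter_range]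
    congr 1
    refine Finset.filter_congr fun n hn => ?_
    rw [hresp n (Finset.mem_range.1 hn).le]
  have hplay : (respond σ y N).isSome = true := by
    rw [hresp N le_rfl, ← hN]
    exact Nat.nth_mem_of_infinite hx k
  have hnth : Nat.nth (fun n => (respond σ y n).isSome = true) k = N := by
    rw [← hcount]
    exact Nat.nth_count hplay
  rw [output, output, hnth, hN, hresp N le_rfl]

theorem continuousAt_output (hx : InfPlays σ x) : ContinuousAt (output σ) x :=
  continuousAt_pi.2 fun _ => tendsto_const_nhds.congr' <|
    Filter.mem_of_superset (cylinder_mem_nhds x _) fun _ hy =>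
      (output_eq_of_mem_cylinder hx hy).symm

theorem output_eq_of_respond_eq_some (hx : InfPlays σ x)
    (hy : ∀ n v, respond σ x n = some v →
      v = y (Nat.count (fun m => (respond σ x m).isSome = true) n)) :
    output σ x = y := by
  funext k
  obtain ⟨v, hv⟩ := Option.isSome_iff_exists.1 (Nat.nth_mem_of_infinite hx k)
  rw [output, hv, Option.getD_some, hy _ _ hv, Nat.count_nth_of_infinite hx k]

namespace PFunB

variable (F : PFunB)

def Decides (x : ℕ → ℕ) (m j : ℕ) : Prop :=
  ∃ v, ∀ y ∈ F.dom ∩ cylinder x m, F.toFun y j = v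

noncomputable def decided (x : ℕ → ℕ) (m j : ℕ) : ℕ :=
  Classical.epsilon fun v => ∀ y ∈ F.dom ∩ cylinder x m, F.toFun y j = v

open Classical in
/-- The number of values `F.strategy` has played in rounds `0, …, n - 1` against `x`. -/
noncomputable def played (x : ℕ → ℕ) : ℕ → ℕ
  | 0 => 0
  | n + 1 => played x n + if F.Decides x (n + 1) (played x n) then 1 else 0

open Classical in
/-- Player II plays the next value of `F` as soon as I's moves so far decide it (the list `s`
of those moves is padded with zeros to a point of Baire space). -/
noncomputable def strategy : Strategy := fun s =>
  let x := fun i => s.getD i 0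
  if F.Decides x s.length (F.played x (s.length - 1)) then
    some (F.decided x s.length (F.played x (s.length - 1)))
  else none

variable {F}

theorem decides_iff_of_mem_cylinder {m : ℕ} (h : y ∈ cylinder x m) (j : ℕ) :
    F.Decides y m j ↔ F.Decides x m j := by
  rw [Decides, Decides, mem_cylinder_iff_eq.1 h]

theorem decided_eq_of_mem_cylinder {m : ℕ} (h : y ∈ cylinder x m) (j : ℕ) :
    F.decided y m j = F.decided x m j := by
  rw [decided, decided, mem_cylinder_iff_eq.1 h]

theorem decided_eq_apply (hx : x ∈ F.dom) {m j : ℕ} (h : F.Decides x m j) :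
    F.decided x m j = F.toFun x j :=
  (Classical.epsilon_spec h x ⟨hx, self_mem_cylinder x m⟩).symm

open Classical in
theorem played_eq_of_mem_cylinder : ∀ {n : ℕ}, y ∈ cylinder x n → F.played y n = F.played x n
  | 0, _ => rfl
  | n + 1, h => by
    rw [played, played, played_eq_of_mem_cylinder (cylinder_anti x n.le_succ h)]
    simp only [decides_iff_of_mem_cylinder h]

theorem played_monotone (x : ℕ → ℕ) : Monotone (F.played x) :=
  monotone_nat_of_le_succ fun n => by
    rw [played]
    exact Nat.le_add_right _ _

open Classical in
theorem respond_strategy (x : ℕ → ℕ) (n : ℕ) :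
    respond F.strategy x n =
      if F.Decides x (n + 1) (F.played x n) then some (F.decided x (n + 1) (F.played x n))
      else none := by
  have hx : (fun i => (List.ofFn fun i : Fin (n + 1) => x i).getD i 0) ∈ cylinder x (n + 1) :=
    mem_cylinder_iff.2 fun i hi => by
      rw [List.getD_eq_getElem?_getD, List.getElem?_ofFn]
      simp [hi]
  simp only [respond, strategy, List.length_ofFn, Nat.add_sub_cancel,
    played_eq_of_mem_cylinder (cylinder_anti x n.le_succ hx),
    decides_iff_of_mem_cylinder hx, decided_eq_of_mem_cylinder hx]

theorem played_eq_count (x : ℕ → ℕ) (n : ℕ) :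
    F.played x n = Nat.count (fun m => (respond F.strategy x m).isSome = true) n := by
  induction n with
  | zero => rfl
  | succ n ih =>
    rw [played, Nat.count_succ, ← ih, respond_strategy]
    by_cases h : F.Decides x (n + 1) (F.played x n) <;> simp [h]

theorem IsContinuous.exists_decides (hF : F.IsContinuous) (hx : x ∈ F.dom) (j : ℕ) :
    ∃ M, ∀ m ≥ M, F.Decides x m j := by
  have hj : ContinuousWithinAt (fun y => F.toFun y j) F.dom x :=
    (continuous_apply j).continuousAt.comp_continuousWithinAt (hF x hx)
  obtain ⟨u, hu, hsub⟩ := mem_nhdsWithin_iff_exists_mem_nhds_inter.1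
    (hj ((isOpen_discrete {F.toFun x j}).mem_nhds rfl))
  obtain ⟨M, hM⟩ := exists_cylinder_subset hu
  exact ⟨M, fun m hm => ⟨F.toFun x j, fun y ⟨hyF, hym⟩ =>
    hsub ⟨hM (cylinder_anti x hm hym), hyF⟩⟩⟩

theorem IsContinuous.exists_played_gt (hF : F.IsContinuous) (hx : x ∈ F.dom) (n : ℕ) :
    ∃ m, F.played x n < F.played x m := by
  obtain ⟨M, hM⟩ := hF.exists_decides hx (F.played x n)
  by_contra! hle
  have hconst : F.played x (max n M) = F.played x n :=
    le_antisymm (hle _) (played_monotone x (le_max_left n M))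
  have hnext := hle (max n M + 1)
  rw [played, hconst, if_pos (hM _ (by omega))] at hnext
  omega

theorem IsContinuous.infPlays_strategy (hF : F.IsContinuous) (hx : x ∈ F.dom) :
    InfPlays F.strategy x := by
  have hunbdd : ∀ c, ∃ n, c ≤ F.played x n := by
    intro c
    induction c with
    | zero => exact ⟨0, Nat.zero_le _⟩
    | succ c ih =>
      obtain ⟨n, hn⟩ := ih
      obtain ⟨m, hm⟩ := hF.exists_played_gt hx n
      exact ⟨m, by omega⟩
  by_contra hfin
  obtain ⟨n, hn⟩ := hunbdd ((Set.not_infinite.1 hfin).toFinset.card + 1)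
  have hcard := Nat.count_le_card (Set.not_infinite.1 hfin) n
  rw [played_eq_count] at hn
  omega

theorem IsContinuous.output_strategy (hF : F.IsContinuous) (hx : x ∈ F.dom) :
    output F.strategy x = F.toFun x :=
  output_eq_of_respond_eq_some (hF.infPlays_strategy hx) fun n v hv => by
    rw [respond_strategy] at hv
    split_ifs at hv with hdec
    rw [← played_eq_count, ← Option.some_inj.1 hv, decided_eq_apply hx hdec]

end PFunB

end Strategies

section WadgeGame

variable {X Y A B : Type*} {δX : RepSpace X} {δY : RepSpace Y} {δA : RepSpace A}
  {δB : RepSpace B} {ζ : Y → Set (ℕ → ℕ)} {T : X → Set Y} {f : A → Set B}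

theorem wc_of_wadgeWinning (hζ : MCts δY idRep ζ) {σ : Strategy}
    (hσ : WadgeWinning δX δA δB ζ T f σ) : Wc δA δB δX δY f T := by
  obtain ⟨Z, hZc, hZ⟩ := hζ
  refine wc_iff_exists_reducesVia.2 ⟨⟨{pq | pq.2 ∈ Z.dom}, fun pq => Z.toFun pq.2⟩,
    ⟨{x | InfPlays σ x}, output σ⟩,
    (show ContinuousOn Z.toFun Z.dom from hZc).comp continuous_snd.continuousOn fun _ h => h,
    fun x hx => (continuousAt_output hx).continuousWithinAt, fun p hp hf => ?_⟩
  obtain ⟨hinf, hgame⟩ := hσ p (mcomp_toMV_nonempty_iff.2 ⟨hp, hf⟩)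
  obtain ⟨hX, hT, hζT⟩ := gameMap_nonempty_and_subset_iff.1 hgame
  refine ⟨hinf, hX, hT, fun q hq hqT => ?_⟩
  obtain ⟨hqZ, -, hZq⟩ := hZ q hq (hζT _ hqT).1
  obtain ⟨hB, hmem⟩ := (hζT _ hqT).2 _ hZq
  exact ⟨hqZ, hB, (mem_mcomp_toMV.1 hmem).2⟩

/-- Defined at `y` only when every name of `y` lies in `K.dom`, so that `K` realizes it. -/
def PFunB.realizedMV (K : PFunB) (δY : RepSpace Y) : Y → Set (ℕ → ℕ) := fun y =>
  {w | (∀ q ∈ δY.dom, δY.map q = y → q ∈ K.dom) ∧ ∃ q ∈ δY.dom, δY.map q = y ∧ K.toFun q = w}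

theorem PFunB.realizes_realizedMV (K : PFunB) : Realizes δY idRep K (K.realizedMV δY) := by
  rintro q hq ⟨-, hall, -⟩
  exact ⟨hall q hq rfl, trivial, hall, q, hq, rfl, rfl⟩

theorem PFunB.realizedMV_nonempty_and_forall {K : PFunB} {y : Y} {P : (ℕ → ℕ) → Prop}
    (h : ∀ q ∈ δY.dom, δY.map q = y → q ∈ K.dom ∧ P (K.toFun q)) :
    (K.realizedMV δY y).Nonempty ∧ ∀ w ∈ K.realizedMV δY y, P w := by
  obtain ⟨q, hq, rfl⟩ := δY.surj y
  refine ⟨⟨K.toFun q, fun q' hq' h' => (h q' hq' h').1, q, hq, rfl, rfl⟩, ?_⟩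
  rintro w ⟨-, q', hq', h', rfl⟩
  exact (h q' hq' h').2

theorem exists_wadgeWinning_of_strongReducesVia (hζ : IsProbe δY ζ)
    (htr : Transparent δX δY T) {H K : PFunB} (hH : H.IsContinuous) (hK : K.IsContinuous)
    (h : StrongReducesVia δA δB δX δY f T H K) :
    ∃ σ, WadgeWinning δX δA δB ζ T f σ := by
  obtain ⟨e, he, hζe⟩ := hζ.2 _ ⟨K, hK, K.realizes_realizedMV⟩
  obtain ⟨d, ⟨D, hDc, hD⟩, hTd⟩ := htr e he
  -- `ζ ∘ T ∘ d ⪯ ζ ∘ e ∘ T ⪯ K ∘ T`: `D ∘ H` transforms I's input into an instance of `T`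
  -- all of whose solutions are probed by `ζ` into names of solutions of `f`.
  have hζTd : Tightens (MComp ζ (MComp T d)) (MComp (K.realizedMV δY) T) :=
    (hTd.mcomp_left ζ).trans (by rw [mcomp_assoc]; exact hζe.mcomp_right T)
  refine ⟨(D.comp H).strategy, fun x hx => ?_⟩
  obtain ⟨hxA, hf⟩ := mcomp_toMV_nonempty_iff.1 hx
  obtain ⟨hxH, hHX, hT, hKf⟩ := h x hxA hf
  have hgood := hζTd.nonempty_and_forall
    (P := fun w => w ∈ δB.dom ∧ δB.map w ∈ MComp f δA.toMV x) <|
    mcomp_nonempty_and_forall_iff.2 ⟨hT, fun y hy =>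
      PFunB.realizedMV_nonempty_and_forall fun q hq hqy =>
        let ⟨hqK, hB, hfK⟩ := hKf q hq (hqy ▸ hy)
        ⟨hqK, hB, mem_mcomp_toMV.2 ⟨hxA, hfK⟩⟩⟩
  simp only [mcomp_nonempty_and_forall_iff] at hgood
  obtain ⟨hd, hdT⟩ := hgood
  obtain ⟨hHD, hDX, hDd⟩ := hD _ hHX hd
  have hxDH : x ∈ (D.comp H).dom := ⟨hxH, hHD⟩
  have hDH := hDc.comp hH
  refine ⟨hDH.infPlays_strategy hxDH, ?_⟩
  rw [hDH.output_strategy hxDH]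
  exact gameMap_nonempty_and_subset_iff.2 ⟨hDX, hdT _ hDd⟩

end WadgeGame

/-- **Main theorem.** Let `ζ` be a probe for `Y` and let `T :⊆ X ⇉ Y` be a transparent
cylinder. Then player II has a winning strategy in the `(ζ, T)`-Wadge game for `f` iff
`f ≤_W^c T`. -/
theorem wadge_game_iff_wc {X Y A B : Type*}
    (δX : RepSpace X) (δY : RepSpace Y) (δA : RepSpace A) (δB : RepSpace B)
    (ζ : Y → Set (ℕ → ℕ)) (hζ : IsProbe δY ζ)
    (T : X → Set Y) (hcyl : IsCylinder δX δY T) (htr : Transparent δX δY T)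
    (f : A → Set B) :
    (∃ σ : Strategy, WadgeWinning δX δA δB ζ T f σ) ↔ Wc δA δB δX δY f T := by
  refine ⟨fun ⟨_, hσ⟩ => wc_of_wadgeWinning hζ.1 hσ, fun hW => ?_⟩
  obtain ⟨K, H, hK, hH, hfT⟩ := wc_iff_exists_reducesVia.1 hW
  obtain ⟨Kc, Hc, hKc, hHc, hTc⟩ := StrongWc.exists_strongReducesVia hcyl
  exact exists_wadgeWinning_of_strongReducesVia hζ htr (hHc.comp hH.pairSelf)
    (hK.onPairs.comp hKc) (hfT.strongReducesVia_idProd.trans hTc)
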